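/- arXiv:2008.00133 — 2 statements merged into one kernel-verified Lean document; each statement's English description precedes it below -/
import Mathlib

section
/- Let n ≥ 1, x ≥ 0, let (a_0,…,a_k) be nonnegative integers, and fix an index i with 1 ≤ i ≤ k and a_i ≥ 1 (when i = k, interpret references to a_{k+1} by extending the tuple with a_{k+1} = 0). Then Q_n^{(x)}(a_0,…,a_k) = 2·Q_{n-1}^{(x)}(a_0,…,a_k) + Q_{n-1}^{(x)}(…, a_{i-1} + 1, a_i − 1, …) + Q_{n-1}^{(x)}(…, a_i − 1, a_{i+1} + 1, …) − Q_{n-1}^{(x)}(…, a_{i-1} + 1, a_i, …) − Q_{n-1}^{(x)}(…, a_i + 1, …) − Q_{n-1}^{(x)}(…, a_i, a_{i+1} + 1, …), where in each term only the indicated entries of the tuple are changed. -/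
/-!
Weight Dyck paths by their length. The first-return decomposition `r = U p D q` shows that the
generating function `B h` of Dyck paths of height `< h` satisfies `B (h+1) = 1 + X² B h B (h+1)`,
while paths of height exactly `h` have generating function `F h = B (h+1) - B h`. Eliminating the
`B`'s from three consecutive instances of the recursion gives the algebraic identity
`F (z+1) = X² (2 F (z+1) + F z + F (z+2) - F (z+1) (F z + F (z+1) + F (z+2)))`.
Since counting tuples multiplies generating functions, `Qx n x a` is the coefficient of `X^(2n)` in
`∏ᵢ F (x+i) ^ aᵢ`; multiplying the identity by the remaining factors and comparing coefficients of
`X^(2n)` gives the theorem.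
-/

/-- A Dyck path: a finite sequence of ±1 steps with all partial sums nonnegative
and total sum zero. -/
def IsDyckPath (p : List ℤ) : Prop :=
  (∀ s ∈ p, s = 1 ∨ s = -1) ∧ (∀ k, 0 ≤ (p.take k).sum) ∧ p.sum = 0

/-- The height of a path: the maximum of its partial sums (0 for the empty path). -/
def pathHeight (p : List ℤ) : ℕ :=
  Finset.sup (Finset.range (p.length + 1)) (fun k => ((p.take k).sum).toNat)

/-- Super-Catalan numbers `T(m,n) = (2m)!(2n)!/(2·m!·n!·(m+n)!)`, as a rational number. -/
def superCatalan (m n : ℕ) : ℚ :=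
  ((2 * m).factorial * (2 * n).factorial : ℚ) /
    (2 * m.factorial * n.factorial * (m + n).factorial)

/-- `G n m k`: the number of `m`-tuples of Dyck paths of total length `2n` all of whose
pairwise height differences are at most `k` (this is `0` when `n < 0`). -/
noncomputable def G (n : ℤ) (m k : ℕ) : ℕ :=
  Nat.card {p : Fin m → List ℤ //
    (∀ i, IsDyckPath (p i)) ∧
    (∑ i, ((p i).length : ℤ)) = 2 * n ∧
    ∀ i j, |(pathHeight (p i) : ℤ) - (pathHeight (p j) : ℤ)| ≤ (k : ℤ)}

/-- The path-height function `P n [a₁,…,aₘ]`: the number of `m`-tuples of Dyck paths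
of total length `2n` whose `i`-th path has height `aᵢ`. -/
noncomputable def P (n : ℤ) (a : List ℕ) : ℕ :=
  Nat.card {p : Fin a.length → List ℤ //
    (∀ i, IsDyckPath (p i)) ∧
    (∑ i, ((p i).length : ℤ)) = 2 * n ∧
    ∀ i, pathHeight (p i) = a.get i}

/-- `Qx n x [a₀,…,a_k]` is `P n` evaluated at `a₀` copies of `x`, `a₁` copies of `x+1`, …,
`a_k` copies of `x+k`. -/
noncomputable def Qx (n : ℤ) (x : ℕ) (a : List ℕ) : ℕ :=
  P n (a.zipIdx.flatMap fun q => List.replicate q.1 (x + q.2))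

/-- The grouped path-height function `Q n a = ∑_{x=0}^∞ Qx n x a`. Whenever some entry
of `a` is positive (as in every application below) all terms with `x > n` vanish, since
a Dyck path of height at least `x` has length at least `2x`; so the infinite sum equals
its truncation at `x = n`. -/
noncomputable def Q (n : ℤ) (a : List ℕ) : ℕ :=
  ∑ x ∈ Finset.range (n.toNat + 1), Qx n x a

open PowerSeries

section Counting

variable {α ι : Type*} (R : Type*) [CommSemiring R]

noncomputable def cardSeries (w : α → ℕ) (S : α → Prop) : PowerSeries R :=
  PowerSeries.mk fun k => (Nat.card {x // S x ∧ w x = k} : R)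

theorem cardSeries_eq_add {w : α → ℕ} {S T U : α → Prop} [∀ k, Finite {x // S x ∧ w x = k}]
    (hST : ∀ x, S x ↔ T x ∨ U x) (hTU : ∀ x, T x → ¬U x) :
    cardSeries R w S = cardSeries R w T + cardSeries R w U := by
  classical
  ext k
  have hT : Finite {x // T x ∧ w x = k} :=
    .of_injective (fun x => (⟨x.1, (hST x.1).2 (.inl x.2.1), x.2.2⟩ : {x // S x ∧ w x = k}))
      fun x y h => by simpa [Subtype.ext_iff] using h
  have hU : Finite {x // U x ∧ w x = k} :=
    .of_injective (fun x => (⟨x.1, (hST x.1).2 (.inr x.2.1), x.2.2⟩ : {x // S x ∧ w x = k}))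
      fun x y h => by simpa [Subtype.ext_iff] using h
  simp only [cardSeries, coeff_mk, map_add, ← Nat.cast_add, ← Nat.card_sum]
  congr 1
  refine Nat.card_congr ((Equiv.subtypeEquivRight fun x => ?_).trans
    (Equiv.Set.union (s := {x | T x ∧ w x = k}) (t := {x | U x ∧ w x = k})
      (Set.disjoint_left.2 fun x hT hU => hTU x hT.1 hU.1)))
  rw [Set.mem_union, Set.mem_ofPred_eq, Set.mem_ofPred_eq, hST, or_and_right]

theorem natCard_sum_weight_eq_coeff_prod [Fintype ι] (w : α → ℕ) (S : ι → α → Prop)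
    [∀ i k, Finite {x // S i x ∧ w x = k}] (n : ℕ) :
    (Nat.card {f : ι → α // (∀ i, S i (f i)) ∧ ∑ i, w (f i) = n} : R) =
      coeff n (∏ i, cardSeries R w (S i)) := by
  classical
  simp only [coeff_prod, cardSeries, coeff_mk, ← Nat.cast_prod, ← Nat.cast_sum, ← Nat.card_pi,
    ← Nat.card_congr (Equiv.subtypePiEquivPi (p := fun i x => S i x ∧ w x = _))]
  have (l : ι → ℕ) : Finite {f : ι → α // ∀ i, S i (f i) ∧ w (f i) = l i} :=
    .of_equiv (∀ i, {x // S i x ∧ w x = l i}) Equiv.subtypePiEquivPi.symm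
  rw [← Finset.sum_coe_sort, ← Nat.card_sigma]
  congr 1
  refine Nat.card_congr
    { toFun := fun f => ⟨⟨Finsupp.equivFunOnFinite.symm fun i => w (f.1 i), ?_⟩,
        ⟨f.1, fun i => ⟨f.2.1 i, rfl⟩⟩⟩
      invFun := fun g => ⟨g.2.1, fun i => (g.2.2 i).1, ?_⟩
      left_inv := fun f => rfl
      right_inv := fun g => Sigma.subtype_ext (Subtype.ext ?_) rfl }
  · simp [Finset.mem_finsuppAntidiag, f.2.2]
  · obtain ⟨⟨l, hl⟩, g, hg⟩ := g
    simp only [(hg _).2]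
    simpa [Finset.mem_finsuppAntidiag] using hl
  · obtain ⟨⟨l, hl⟩, g, hg⟩ := g
    ext i
    simp [(hg i).2]

theorem cardSeries_length_eq_nil :
    cardSeries R List.length (fun l : List α => l = []) = 1 := by
  ext (_ | k)
  · simp [cardSeries]
  · have : IsEmpty {l : List α // l = [] ∧ l.length = k + 1} :=
      ⟨fun ⟨l, hl, hlen⟩ => by simp [hl] at hlen⟩
    simp [cardSeries, coeff_one]

end Counting

section DyckPath

variable {p q r : List ℤ}

def glue (p q : List ℤ) : List ℤ := 1 :: (p ++ -1 :: q)

theorem length_glue (p q : List ℤ) : (glue p q).length = p.length + q.length + 2 := by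
  simp only [glue, List.length_cons, List.length_append]
  omega

theorem sum_take_succ_glue {k : ℕ} (hk : k ≤ p.length) :
    ((glue p q).take (k + 1)).sum = 1 + (p.take k).sum := by
  simp [glue, List.take_append, Nat.sub_eq_zero_of_le hk]

theorem sum_take_glue_add (hp : p.sum = 0) (k : ℕ) :
    ((glue p q).take (p.length + 2 + k)).sum = (q.take k).sum := by
  rw [show p.length + 2 + k = p.length + 1 + k + 1 by omega]
  simp [glue, List.take_append, show p.length + 1 + k - p.length = k + 1 by omega,
    List.take_of_length_le (show p.length ≤ p.length + 1 + k by omega), hp]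

theorem forall_sum_take_glue_iff (hp : p.sum = 0) (C : ℤ → Prop) :
    (∀ k, C ((glue p q).take k).sum) ↔
      C 0 ∧ (∀ k, C (1 + (p.take k).sum)) ∧ ∀ k, C (q.take k).sum := by
  constructor
  · intro h
    refine ⟨h 0, fun k => ?_, fun k => sum_take_glue_add hp k ▸ h _⟩
    rcases le_or_gt k p.length with hk | hk
    · exact sum_take_succ_glue hk ▸ h (k + 1)
    · rw [List.take_of_length_le hk.le, ← List.take_length (l := p)]
      exact sum_take_succ_glue le_rfl ▸ h (p.length + 1)
  · rintro ⟨h0, hp', hq⟩ (_ | k)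
    · exact h0
    rcases le_or_gt k p.length with hk | hk
    · exact sum_take_succ_glue hk ▸ hp' k
    · rw [show k + 1 = p.length + 2 + (k - p.length - 1) by omega, sum_take_glue_add hp]
      exact hq _

theorem pathHeight_le_iff {h : ℕ} :
    pathHeight p ≤ h ↔ ∀ k, (p.take k).sum ≤ h := by
  simp only [pathHeight, Finset.sup_le_iff, Finset.mem_range, Int.toNat_le]
  refine ⟨fun H k => ?_, fun H k _ => H k⟩
  rcases le_or_gt k p.length with hk | hk
  · exact H k (by omega)
  · rw [List.take_of_length_le hk.le, ← List.take_length (l := p)]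
    exact H _ (by omega)

theorem pathHeight_lt_iff {h : ℕ} :
    pathHeight p < h ↔ ∀ k, (p.take k).sum < h := by
  cases h with
  | zero => simpa using ⟨0, by simp⟩
  | succ h =>
    rw [Nat.lt_succ_iff, pathHeight_le_iff]
    push_cast
    simp only [Int.lt_add_one_iff]

theorem pathHeight_glue_lt_iff (hp : p.sum = 0) {h : ℕ} :
    pathHeight (glue p q) < h + 1 ↔ pathHeight p < h ∧ pathHeight q < h + 1 := by
  simp only [pathHeight_lt_iff, forall_sum_take_glue_iff hp (· < ((h + 1 : ℕ) : ℤ))]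
  push_cast
  simp [add_comm (1 : ℤ)]

theorem isDyckPath_glue (hp : IsDyckPath p) (hq : IsDyckPath q) : IsDyckPath (glue p q) := by
  refine ⟨?_, (forall_sum_take_glue_iff hp.2.2 (0 ≤ ·)).2 ⟨le_rfl, fun k => ?_, hq.2.1⟩, ?_⟩
  · simp only [glue, List.mem_cons, List.mem_append]
    rintro s (rfl | hs | rfl | hs)
    exacts [.inl rfl, hp.1 s hs, .inr rfl, hq.1 s hs]
  · linarith [hp.2.1 k]
  · simp [glue, hp.2.2, hq.2.2]

theorem length_le_of_append_neg_one_cons_eq {p₁ q₁ p₂ q₂ : List ℤ} (hp₁ : p₁.sum = 0)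
    (hp₂ : ∀ k, 0 ≤ (p₂.take k).sum) (h : p₁ ++ -1 :: q₁ = p₂ ++ -1 :: q₂) :
    p₂.length ≤ p₁.length := by
  by_contra! hlt
  have h₁ : ((p₁ ++ -1 :: q₁).take (p₁.length + 1)).sum = -1 := by
    simp [List.take_append, List.take_of_length_le, hp₁]
  have h₂ : ((p₂ ++ -1 :: q₂).take (p₁.length + 1)).sum = (p₂.take (p₁.length + 1)).sum := by
    simp [List.take_append, Nat.sub_eq_zero_of_le hlt]
  linarith [hp₂ (p₁.length + 1), h ▸ h₁]

theorem glue_inj {p₁ q₁ p₂ q₂ : List ℤ} (hp₁ : IsDyckPath p₁) (hp₂ : IsDyckPath p₂) :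
    glue p₁ q₁ = glue p₂ q₂ ↔ p₁ = p₂ ∧ q₁ = q₂ := by
  refine ⟨fun h => ?_, by rintro ⟨rfl, rfl⟩; rfl⟩
  have h' : p₁ ++ -1 :: q₁ = p₂ ++ -1 :: q₂ := List.cons_injective h
  obtain ⟨rfl, h''⟩ := List.append_inj h' <| le_antisymm
    (length_le_of_append_neg_one_cons_eq hp₂.2.2 hp₁.2.1 h'.symm)
    (length_le_of_append_neg_one_cons_eq hp₁.2.2 hp₂.2.1 h')
  exact ⟨rfl, List.cons_injective h''⟩

theorem exists_eq_append_neg_one_cons {l : List ℤ} (hl : ∀ s ∈ l, s = 1 ∨ s = -1) (c : ℕ)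
    {k : ℕ} (hk : c + (l.take k).sum < 0) :
    ∃ p q, l = p ++ -1 :: q ∧ (∀ j, 0 ≤ (c : ℤ) + (p.take j).sum) ∧ (c : ℤ) + p.sum = 0 := by
  induction l generalizing c k with
  | nil =>
    simp only [List.take_nil, List.sum_nil, add_zero] at hk
    omega
  | cons s t ih =>
    obtain _ | k := k
    · simp only [List.take_zero, List.sum_nil, add_zero] at hk
      omega
    have ht : ∀ s ∈ t, s = 1 ∨ s = -1 := fun s hs => hl s (List.mem_cons_of_mem _ hs)
    simp only [List.take_succ_cons, List.sum_cons] at hk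
    rcases hl s List.mem_cons_self with rfl | rfl
    · obtain ⟨p, q, rfl, hp, hsum⟩ := ih ht (c + 1) (k := k) (by push_cast; linarith)
      push_cast at hp hsum
      refine ⟨1 :: p, q, rfl, fun | 0 => by simp | j + 1 => ?_, ?_⟩
      · simp only [List.take_succ_cons, List.sum_cons]
        linarith [hp j]
      · simp only [List.sum_cons]
        linarith
    · cases c with
      | zero => exact ⟨[], t, rfl, by simp, by simp⟩
      | succ c =>
        obtain ⟨p, q, rfl, hp, hsum⟩ := ih ht c (k := k) (by push_cast at hk; linarith)
        refine ⟨-1 :: p, q, rfl, fun | 0 => ?_ | j + 1 => ?_, ?_⟩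
        · simp only [List.take_zero, List.sum_nil, add_zero]
          positivity
        · simp only [Nat.cast_add, Nat.cast_one, List.take_succ_cons, List.sum_cons]
          linarith [hp j]
        · simp only [Nat.cast_add, Nat.cast_one, List.sum_cons]
          linarith

theorem IsDyckPath.exists_eq_glue (hr : IsDyckPath r) (hne : r ≠ []) :
    ∃ p q, IsDyckPath p ∧ IsDyckPath q ∧ r = glue p q := by
  obtain ⟨s, t, rfl⟩ := List.exists_cons_of_ne_nil hne
  obtain ⟨hsteps, hpos, hsum⟩ := hr
  obtain rfl : s = 1 := by
    have := hpos 1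
    simp only [List.take_succ_cons, List.take_zero, List.sum_cons, List.sum_nil, add_zero] at this
    rcases hsteps s List.mem_cons_self with h | h <;> omega
  have htsteps : ∀ s ∈ t, s = 1 ∨ s = -1 := fun s h => hsteps s (List.mem_cons_of_mem _ h)
  simp only [List.sum_cons] at hsum
  obtain ⟨p, q, rfl, hp, hp0⟩ :=
    exists_eq_append_neg_one_cons htsteps 0 (k := t.length) <| by
      rw [List.take_length, Nat.cast_zero]
      linarith
  simp only [Nat.cast_zero, zero_add] at hp hp0
  have hq := ((forall_sum_take_glue_iff (q := q) hp0 (0 ≤ ·)).1 hpos).2.2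
  refine ⟨p, q, ⟨fun s h => htsteps s (by simp [h]), hp, hp0⟩,
    ⟨fun s h => htsteps s (by simp [h]), hq, ?_⟩, rfl⟩
  simpa [hp0] using hsum

instance instFiniteDyckPath (Q : List ℤ → Prop) (k : ℕ) :
    Finite {p : List ℤ // (IsDyckPath p ∧ Q p) ∧ p.length = k} := by
  refine Set.Finite.to_subtype (s := {p | (IsDyckPath p ∧ Q p) ∧ p.length = k}) ?_
  refine ((List.finite_length_eq Bool k).image (List.map fun b => if b then 1 else -1)).subset ?_
  rintro p ⟨⟨hp, -⟩, rfl⟩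
  refine ⟨p.map fun s => decide (s = 1), by simp, ?_⟩
  rw [List.map_map]
  conv_rhs => rw [← List.map_id p]
  refine List.map_congr_left fun s hs => ?_
  rcases hp.1 s hs with rfl | rfl <;> rfl

end DyckPath

-- A strict bound makes `heightLTSeries 0 = 0`, so the recursion below holds from `h = 0` on.
noncomputable def heightLTSeries (h : ℕ) : PowerSeries ℤ :=
  cardSeries ℤ List.length fun p => IsDyckPath p ∧ pathHeight p < h

noncomputable def heightSeries (h : ℕ) : PowerSeries ℤ :=
  cardSeries ℤ List.length fun p => IsDyckPath p ∧ pathHeight p = h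

theorem heightSeries_eq_sub (h : ℕ) :
    heightSeries h = heightLTSeries (h + 1) - heightLTSeries h := by
  refine eq_sub_of_add_eq' (cardSeries_eq_add ℤ (fun p => ?_) fun p hlt heq => ?_).symm
  · rw [Nat.lt_succ_iff_lt_or_eq, and_or_left]
  · exact hlt.2.ne heq.2

theorem natCard_pairs_eq_natCard_ne_nil (h m : ℕ) :
    Nat.card {f : Fin 2 → List ℤ //
        (∀ i, IsDyckPath (f i) ∧ pathHeight (f i) < h + i) ∧ ∑ i, (f i).length = m} =
      Nat.card {r : List ℤ //
        ((IsDyckPath r ∧ pathHeight r < h + 1) ∧ r ≠ []) ∧ r.length = m + 2} := by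
  refine Nat.card_eq_of_bijective (fun f => ⟨glue (f.1 0) (f.1 1), ?_⟩) ⟨?_, ?_⟩
  · obtain ⟨hf, hlen⟩ := f.2
    simp only [Fin.forall_fin_two, Fin.sum_univ_two, Fin.isValue, Fin.val_zero, Fin.val_one,
      add_zero] at hf hlen
    refine ⟨⟨⟨isDyckPath_glue hf.1.1 hf.2.1,
      (pathHeight_glue_lt_iff hf.1.1.2.2).2 ⟨hf.1.2, hf.2.2⟩⟩, List.cons_ne_nil _ _⟩, ?_⟩
    rw [length_glue]
    omega
  · rintro ⟨f, hf, _⟩ ⟨g, hg, _⟩ hfg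
    obtain ⟨h0, h1⟩ := (glue_inj (hf 0).1 (hg 0).1).1 (Subtype.ext_iff.mp hfg)
    exact Subtype.ext (funext (Fin.forall_fin_two.2 ⟨h0, h1⟩))
  · rintro ⟨r, ⟨⟨hr, hh⟩, hne⟩, hlen⟩
    obtain ⟨p, q, hp, hq, rfl⟩ := hr.exists_eq_glue hne
    rw [pathHeight_glue_lt_iff hp.2.2] at hh
    refine ⟨⟨![p, q], Fin.forall_fin_two.2 ⟨⟨hp, by simpa using hh.1⟩, ⟨hq, hh.2⟩⟩, ?_⟩, rfl⟩
    rw [length_glue] at hlen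
    simp only [Fin.sum_univ_two, Matrix.cons_val_zero, Matrix.cons_val_one]
    omega

theorem heightLTSeries_succ (h : ℕ) :
    heightLTSeries (h + 1) = 1 + X ^ 2 * (heightLTSeries h * heightLTSeries (h + 1)) := by
  have hnil : IsDyckPath [] ∧ pathHeight [] < h + 1 :=
    ⟨by simp [IsDyckPath], by simp [pathHeight]⟩
  have hsplit : heightLTSeries (h + 1) =
      1 + cardSeries ℤ List.length fun r => (IsDyckPath r ∧ pathHeight r < h + 1) ∧ r ≠ [] := by
    rw [heightLTSeries, cardSeries_eq_add ℤ (T := (· = []))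
      (U := fun r => (IsDyckPath r ∧ pathHeight r < h + 1) ∧ r ≠ [])
      (fun r => by by_cases hr : r = [] <;> simp [hr, hnil]) fun r hr hU => hU.2 hr,
      cardSeries_length_eq_nil]
  refine hsplit.trans (congrArg (1 + ·) ?_)
  ext k
  rw [coeff_X_pow_mul']
  split_ifs with hk
  · obtain ⟨m, rfl⟩ := Nat.exists_eq_add_of_le' hk
    rw [cardSeries, coeff_mk, Nat.add_sub_cancel, ← natCard_pairs_eq_natCard_ne_nil,
      natCard_sum_weight_eq_coeff_prod ℤ List.length
        (fun (i : Fin 2) p => IsDyckPath p ∧ pathHeight p < h + i), Fin.prod_univ_two]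
    simp [heightLTSeries]
  · simp only [cardSeries, coeff_mk, Nat.cast_eq_zero, Nat.card_eq_zero]
    left
    constructor
    rintro ⟨r, ⟨⟨hr, -⟩, hne⟩, hlen⟩
    obtain ⟨p, q, -, -, rfl⟩ := hr.exists_eq_glue hne
    rw [length_glue] at hlen
    omega

theorem heightSeries_succ (z : ℕ) :
    heightSeries (z + 1) = X ^ 2 * (2 * heightSeries (z + 1) + heightSeries z
      + heightSeries (z + 2) - heightSeries (z + 1) *
        (heightSeries z + heightSeries (z + 1) + heightSeries (z + 2))) := by
  simp only [heightSeries_eq_sub]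
  linear_combination (X ^ 2 * heightLTSeries (z + 2) - 1) * heightLTSeries_succ z
    + (1 + X ^ 2 * heightLTSeries (z + 3) - X ^ 2 * heightLTSeries z) * heightLTSeries_succ (z + 1)
    - X ^ 2 * heightLTSeries (z + 1) * heightLTSeries_succ (z + 2)

theorem P_eq_coeff (n : ℕ) (a : List ℕ) :
    (P n a : ℤ) = coeff (2 * n) (a.map heightSeries).prod := by
  simp only [← Fin.prod_univ_fun_getElem, heightSeries, ← natCard_sum_weight_eq_coeff_prod]
  refine congrArg _ (Nat.card_congr (Equiv.subtypeEquivRight fun f => ?_))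
  simp only [forall_and, List.get_eq_getElem]
  norm_cast
  tauto

noncomputable def groupedSeries : ℕ → List ℕ → PowerSeries ℤ
  | _, [] => 1
  | x, a :: l => heightSeries x ^ a * groupedSeries (x + 1) l

theorem groupedSeries_append (x : ℕ) (l₁ l₂ : List ℕ) :
    groupedSeries x (l₁ ++ l₂) = groupedSeries x l₁ * groupedSeries (x + l₁.length) l₂ := by
  induction l₁ generalizing x with
  | nil => simp [groupedSeries]
  | cons a l ih => simp [groupedSeries, ih, mul_assoc, add_assoc, add_comm 1]

theorem prod_map_heightSeries_flatMap_zipIdx (x i : ℕ) (a : List ℕ) :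
    (((a.zipIdx i).flatMap fun q => List.replicate q.1 (x + q.2)).map heightSeries).prod =
      groupedSeries (x + i) a := by
  induction a generalizing i with
  | nil => rfl
  | cons a l ih => simp [List.zipIdx_cons, ih, groupedSeries, add_assoc]

theorem Qx_eq_coeff (n x : ℕ) (a : List ℕ) :
    (Qx n x a : ℤ) = coeff (2 * n) (groupedSeries x a) := by
  rw [Qx, P_eq_coeff, prod_map_heightSeries_flatMap_zipIdx, add_zero]

theorem groupedSeries_shorten (x : ℕ) (l₁ l₂ : List ℕ) (b c d : ℕ) :
    groupedSeries x (l₁ ++ b :: (c + 1) :: d :: l₂) = X ^ 2 *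
      (2 * groupedSeries x (l₁ ++ b :: (c + 1) :: d :: l₂)
        + groupedSeries x (l₁ ++ (b + 1) :: c :: d :: l₂)
        + groupedSeries x (l₁ ++ b :: c :: (d + 1) :: l₂)
        - groupedSeries x (l₁ ++ (b + 1) :: (c + 1) :: d :: l₂)
        - groupedSeries x (l₁ ++ b :: (c + 1 + 1) :: d :: l₂)
        - groupedSeries x (l₁ ++ b :: (c + 1) :: (d + 1) :: l₂)) := by
  simp only [groupedSeries_append, groupedSeries]
  linear_combination groupedSeries x l₁ * heightSeries (x + l₁.length) ^ b *
    heightSeries (x + l₁.length + 1) ^ c * heightSeries (x + l₁.length + 2) ^ d *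
    groupedSeries (x + l₁.length + 1 + 1 + 1) l₂ * heightSeries_succ (x + l₁.length)

/-- `b`, `c`, `d` stand for `a_{i-1}`, `aᵢ`, `a_{i+1}`; the case `i = k` is `d = 0`, `l₂ = []`. -/
theorem grouped_shorten_fixed_base (n : ℕ) (hn : 1 ≤ n) (x : ℕ)
    (l₁ l₂ : List ℕ) (b c d : ℕ) (hc : 1 ≤ c) :
    (Qx (n : ℤ) x (l₁ ++ b :: c :: d :: l₂) : ℤ) =
      2 * Qx ((n : ℤ) - 1) x (l₁ ++ b :: c :: d :: l₂)
        + Qx ((n : ℤ) - 1) x (l₁ ++ (b + 1) :: (c - 1) :: d :: l₂)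
        + Qx ((n : ℤ) - 1) x (l₁ ++ b :: (c - 1) :: (d + 1) :: l₂)
        - Qx ((n : ℤ) - 1) x (l₁ ++ (b + 1) :: c :: d :: l₂)
        - Qx ((n : ℤ) - 1) x (l₁ ++ b :: (c + 1) :: d :: l₂)
        - Qx ((n : ℤ) - 1) x (l₁ ++ b :: c :: (d + 1) :: l₂) := by
  obtain ⟨m, rfl⟩ := Nat.exists_eq_add_of_le' hn
  obtain ⟨c, rfl⟩ := Nat.exists_eq_add_of_le' hc
  have key := congrArg (coeff (2 * (m + 1))) (groupedSeries_shorten x l₁ l₂ b c d)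
  rw [coeff_X_pow_mul', if_pos (by omega), show 2 * (m + 1) - 2 = 2 * m by omega,
    two_mul (groupedSeries x _)] at key
  rw [show ((m + 1 : ℕ) : ℤ) - 1 = m by push_cast; ring, Nat.add_sub_cancel]
  simp only [Qx_eq_coeff, key, map_add, map_sub]
  ring
end

section
/- Let n ≥ 1, x ≥ 1, and let (a_0,…,a_k) be nonnegative integers with a_0 ≥ 1 (when k = 0, interpret references to a_1 by extending the tuple with a_1 = 0). Then Q_n^{(x)}(a_0,…,a_k) = 2·Q_{n-1}^{(x)}(a_0,…,a_k) + Q_{n-1}^{(x-1)}(1, a_0 − 1, a_1, …, a_k) + Q_{n-1}^{(x)}(a_0 − 1, a_1 + 1, a_2, …, a_k) − Q_{n-1}^{(x-1)}(1, a_0, a_1, …, a_k) − Q_{n-1}^{(x)}(a_0 + 1, a_1, …, a_k) − Q_{n-1}^{(x)}(a_0, a_1 + 1, a_2, …, a_k). -/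
/-!
Graded by semilength, the generating function `C h` of Dyck paths of height `< h` satisfies
`C (h + 1) = 1 + X * C h * C (h + 1)` (first-return decomposition `1 q (-1) r`), and paths of
height exactly `h` have generating function `F h = C (h + 1) - C h`. Tuples of paths with
prescribed heights are counted by products of the `F h`, so `Q_n^{(x)}(a₀, a₁, …)` is the
coefficient of `X ^ n` in `F x ^ a₀ * F (x + 1) ^ a₁ * ⋯`. The recurrence is the coefficient form
of `F (y + 1) = X * (2 F (y + 1) + F y + F (y + 2) - F (y + 1) * (F y + F (y + 1) + F (y + 2)))`,
which follows from the relations `C (h + 1) * (1 - X * C h) = 1` for `h = y, y + 1, y + 2` after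
multiplying by the unit `C (y + 3)`.
-/

open PowerSeries Finset

noncomputable def weightGF {α : Type*} (w : α → ℕ) : PowerSeries ℤ :=
  PowerSeries.mk fun n => (Nat.card {a // w a = n} : ℤ)

section WeightGF

variable {α β : Type*}

@[simp]
lemma coeff_weightGF (w : α → ℕ) (n : ℕ) :
    coeff n (weightGF w) = Nat.card {a // w a = n} :=
  coeff_mk _ _

lemma finite_fiber {w : α → ℕ} (hw : ∀ n, {a | w a ≤ n}.Finite) (n : ℕ) :
    Finite {a // w a = n} :=
  ((hw n).subset fun _ ha => le_of_eq ha).to_subtype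

lemma weightGF_congr {w : α → ℕ} {w' : β → ℕ} (e : α ≃ β) (h : ∀ a, w' (e a) = w a) :
    weightGF w' = weightGF w := by
  ext n
  simp only [coeff_weightGF]
  exact congrArg _ (Nat.card_congr (e.subtypeEquiv fun a => by rw [h])).symm

lemma weightGF_zero [Unique α] : weightGF (fun _ : α => 0) = 1 := by
  ext n
  rcases n with _ | n <;> simp [coeff_one]

lemma weightGF_add_one (w : α → ℕ) : weightGF (fun a => w a + 1) = X * weightGF w := by
  ext n
  rcases n with _ | n
  · simp
  · simp [coeff_succ_X_mul]

lemma weightGF_sum {w : α → ℕ} {w' : β → ℕ} (hw : ∀ n, {a | w a ≤ n}.Finite)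
    (hw' : ∀ n, {b | w' b ≤ n}.Finite) :
    weightGF (Sum.elim w w') = weightGF w + weightGF w' := by
  ext n
  have := finite_fiber hw n
  have := finite_fiber hw' n
  simp [Nat.card_congr Equiv.subtypeSum, Nat.card_sum]

lemma finite_sublevel_prod {w : α → ℕ} {w' : β → ℕ} (hw : ∀ n, {a | w a ≤ n}.Finite)
    (hw' : ∀ n, {b | w' b ≤ n}.Finite) (n : ℕ) :
    {z : α × β | w z.1 + w' z.2 ≤ n}.Finite :=
  ((hw n).prod (hw' n)).subset fun z (hz : w z.1 + w' z.2 ≤ n) =>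
    ⟨show w z.1 ≤ n by omega, show w' z.2 ≤ n by omega⟩

def fiberProdEquiv (w : α → ℕ) (w' : β → ℕ) (n : ℕ) :
    {z : α × β // w z.1 + w' z.2 = n} ≃
      Σ ij : antidiagonal n, {a // w a = ij.1.1} × {b // w' b = ij.1.2} where
  toFun z := ⟨⟨(w z.1.1, w' z.1.2), mem_antidiagonal.2 z.2⟩, ⟨z.1.1, rfl⟩, ⟨z.1.2, rfl⟩⟩
  invFun s := ⟨(s.2.1, s.2.2), by rw [s.2.1.2, s.2.2.2]; exact mem_antidiagonal.1 s.1.2⟩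
  left_inv _ := rfl
  right_inv := by
    rintro ⟨⟨⟨i, j⟩, h⟩, ⟨a, ha : w a = i⟩, ⟨b, hb : w' b = j⟩⟩
    subst ha hb
    rfl

lemma weightGF_prod {w : α → ℕ} {w' : β → ℕ} (hw : ∀ n, {a | w a ≤ n}.Finite)
    (hw' : ∀ n, {b | w' b ≤ n}.Finite) :
    weightGF (fun z : α × β => w z.1 + w' z.2) = weightGF w * weightGF w' := by
  ext n
  have := finite_fiber hw
  have := finite_fiber hw'
  rw [coeff_mul, coeff_weightGF, Nat.card_congr (fiberProdEquiv w w' n), Nat.card_sigma,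
    ← Finset.sum_coe_sort (antidiagonal n)]
  push_cast [Nat.card_prod]
  simp

lemma finite_sublevel_pi {m : ℕ} {α : Fin m → Type*} {w : ∀ i, α i → ℕ}
    (hw : ∀ i n, {a | w i a ≤ n}.Finite) (n : ℕ) :
    {f : ∀ i, α i | ∑ i, w i (f i) ≤ n}.Finite :=
  (Set.Finite.pi fun i => hw i n).subset fun f hf i _ =>
    le_trans (Finset.single_le_sum (fun j _ => Nat.zero_le (w j (f j))) (Finset.mem_univ i)) hf

lemma weightGF_pi {m : ℕ} {α : Fin m → Type*} {w : ∀ i, α i → ℕ}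
    (hw : ∀ i n, {a | w i a ≤ n}.Finite) :
    weightGF (fun f : ∀ i, α i => ∑ i, w i (f i)) = ∏ i, weightGF (w i) := by
  induction m with
  | zero => exact weightGF_zero
  | succ m ih =>
    rw [Fin.prod_univ_succ, ← ih fun i => hw i.succ,
      ← weightGF_prod (hw 0) (finite_sublevel_pi fun i => hw i.succ)]
    exact weightGF_congr (Fin.consEquiv α) fun z => Fin.sum_univ_succ _

end WeightGF

lemma forall_sum_take_cons (P : ℤ → Prop) (s : ℤ) (v : List ℤ) :
    (∀ k, P ((s :: v).take k).sum) ↔ P 0 ∧ ∀ k, P (s + (v.take k).sum) := by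
  refine ⟨fun h => ⟨h 0, fun k => by simpa using h (k + 1)⟩, ?_⟩
  rintro ⟨h0, h⟩ (_ | k)
  exacts [h0, by simpa using h k]

lemma forall_sum_take_append (P : ℤ → Prop) (u v : List ℤ) :
    (∀ k, P ((u ++ v).take k).sum) ↔
      (∀ k, P (u.take k).sum) ∧ ∀ k, P (u.sum + (v.take k).sum) := by
  simp only [List.take_append, List.sum_append]
  refine ⟨fun h => ⟨fun k => ?_, fun k => ?_⟩, fun ⟨hu, hv⟩ k => ?_⟩
  · simpa [← List.take_eq_take_min] using h (min k u.length)
  · simpa [List.take_of_length_le] using h (u.length + k)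
  · rcases le_or_gt k u.length with hk | hk
    · simpa [Nat.sub_eq_zero_of_le hk] using hu k
    · rw [List.take_of_length_le hk.le]
      exact hv _

lemma forall_sum_take_wrap (P : ℤ → Prop) {q : List ℤ} (r : List ℤ) (hq : q.sum = 0) :
    (∀ k, P ((1 :: q ++ (-1) :: r).take k).sum) ↔
      (∀ k, P (1 + (q.take k).sum)) ∧ ∀ k, P (r.take k).sum := by
  rw [List.cons_append, forall_sum_take_cons, forall_sum_take_append (fun z => P (1 + z)),
    forall_sum_take_cons (fun z => P (1 + (q.sum + z)))]
  simp only [hq, add_zero, zero_add, add_neg_cancel_left]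
  refine ⟨fun h => ⟨h.2.1, h.2.2.2⟩, fun h => ⟨?_, h.1, ?_, h.2⟩⟩
  · simpa using h.2 0
  · simpa using h.1 0

lemma sum_take_le_pathHeight (p : List ℤ) (k : ℕ) : (p.take k).sum ≤ pathHeight p := by
  rw [List.take_eq_take_min]
  refine (Int.self_le_toNat _).trans (Int.ofNat_le.2 ?_)
  exact Finset.le_sup (f := fun k => ((p.take k).sum).toNat)
    (Finset.mem_range.2 (Nat.lt_succ_of_le (min_le_right _ _)))

lemma natCast_pathHeight_le_iff {p : List ℤ} {c : ℤ} :
    (pathHeight p : ℤ) ≤ c ↔ ∀ k, (p.take k).sum ≤ c := by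
  refine ⟨fun h k => (sum_take_le_pathHeight p k).trans h, fun h => ?_⟩
  have hc : 0 ≤ c := by simpa using h 0
  rw [← Int.toNat_of_nonneg hc, Int.ofNat_le]
  exact Finset.sup_le fun k _ => Int.toNat_le_toNat (h k)

lemma pathHeight_wrap {q : List ℤ} (r : List ℤ) (hq : q.sum = 0) :
    pathHeight (1 :: q ++ (-1) :: r) = max (pathHeight q + 1) (pathHeight r) := by
  refine Int.ofNat_inj.1 (eq_of_forall_ge_iff fun c => ?_)
  rw [natCast_pathHeight_le_iff, forall_sum_take_wrap (· ≤ c) r hq, Nat.cast_max,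
    max_le_iff, Nat.cast_succ, ← le_sub_iff_add_le, natCast_pathHeight_le_iff,
    natCast_pathHeight_le_iff]
  simp only [le_sub_iff_add_le, add_comm]

lemma length_and_sum_eq_count {p : List ℤ} (h : ∀ s ∈ p, s = 1 ∨ s = -1) :
    p.length = p.count 1 + p.count (-1) ∧ p.sum = p.count 1 - p.count (-1) := by
  induction p with
  | nil => simp
  | cons a t ih =>
    obtain ⟨hl, hs⟩ := ih fun s hs => h s (List.mem_cons_of_mem a hs)
    rcases h a List.mem_cons_self with rfl | rfl <;>
      simp only [List.length_cons, List.sum_cons, List.count_cons_self, List.count_cons_of_ne,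
        ne_eq, reduceCtorEq, not_false_eq_true, Int.reduceNeg, Nat.cast_add, Nat.cast_one, hl, hs] <;>
      constructor <;> ring

lemma IsDyckPath.length_eq {p : List ℤ} (hp : IsDyckPath p) : p.length = 2 * p.count 1 := by
  obtain ⟨hl, hs⟩ := length_and_sum_eq_count hp.1
  have := hp.2.2
  omega

lemma IsDyckPath.nil : IsDyckPath [] := by
  simp [IsDyckPath]

lemma IsDyckPath.wrap {q r : List ℤ} (hq : IsDyckPath q) (hr : IsDyckPath r) :
    IsDyckPath (1 :: q ++ (-1) :: r) := by
  refine ⟨?_, (forall_sum_take_wrap (0 ≤ ·) r hq.2.2).2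
    ⟨fun k => by linarith [hq.2.1 k], hr.2.1⟩, by simp [hq.2.2, hr.2.2]⟩
  simp only [List.cons_append, List.mem_cons, List.mem_append]
  rintro s (rfl | hs | rfl | hs)
  exacts [Or.inl rfl, hq.1 s hs, Or.inr rfl, hr.1 s hs]

lemma count_wrap (q r : List ℤ) :
    (1 :: q ++ (-1) :: r).count 1 = q.count 1 + r.count 1 + 1 := by
  simp

lemma exists_eq_append_neg_one {t : List ℤ} (ht : ∀ s ∈ t, s = 1 ∨ s = -1)
    (hneg : ∃ k, (t.take k).sum < 0) :
    ∃ q r, t = q ++ (-1) :: r ∧ (∀ k, 0 ≤ (q.take k).sum) ∧ q.sum = 0 := by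
  have hmin : ∀ k < Nat.find hneg, 0 ≤ (t.take k).sum := fun k hk =>
    not_lt.1 (Nat.find_min hneg hk)
  obtain ⟨j, hj⟩ : ∃ j, Nat.find hneg = j + 1 :=
    Nat.exists_eq_succ_of_ne_zero fun h => by simpa [h] using Nat.find_spec hneg
  have hfirst := Nat.find_spec hneg
  have hj0 := hmin j (by omega)
  rw [hj] at hfirst
  have hjt : j < t.length := by
    by_contra! hle
    rw [List.take_of_length_le (by omega)] at hfirst hj0
    omega
  rw [List.take_add_one, List.sum_append, List.getElem?_eq_getElem hjt] at hfirst
  have hstep : (t.take j).sum = 0 ∧ t[j] = -1 := by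
    rcases ht t[j] (List.getElem_mem hjt) with h | h <;>
      simp only [h, Option.toList_some, List.sum_cons, List.sum_nil, add_zero] at hfirst <;> omega
  refine ⟨t.take j, t.drop (j + 1), ?_, fun k => ?_, hstep.1⟩
  · rw [← hstep.2, List.getElem_cons_drop, List.take_append_drop]
  · rw [List.take_take]
    exact hmin _ (by omega)

lemma IsDyckPath.exists_eq_wrap {p : List ℤ} (hp : IsDyckPath p) (hne : p ≠ []) :
    ∃ q r, IsDyckPath q ∧ IsDyckPath r ∧ p = 1 :: q ++ (-1) :: r := by
  obtain ⟨s, t, rfl⟩ := List.exists_cons_of_ne_nil hne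
  have ht : ∀ x ∈ t, x = 1 ∨ x = -1 := fun x hx => hp.1 x (List.mem_cons_of_mem s hx)
  obtain rfl : s = 1 := by
    have := hp.2.1 1
    rcases hp.1 s List.mem_cons_self with h | h <;> simp_all
  have hsum : t.sum = -1 := by linarith [List.sum_cons (a := 1) (l := t) ▸ hp.2.2]
  obtain ⟨q, r, rfl, hq, hq0⟩ := exists_eq_append_neg_one ht ⟨t.length, by simp [hsum]⟩
  have hr := ((forall_sum_take_wrap (0 ≤ ·) r hq0).1 hp.2.1).2
  refine ⟨q, r, ⟨fun x hx => ht x (by simp [hx]), hq, hq0⟩,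
    ⟨fun x hx => ht x (by simp [hx]), hr, by simpa [hq0] using hp.2.2⟩, rfl⟩

lemma length_le_of_append_neg_one_eq {q q' r r' : List ℤ} (hq : q.sum = 0)
    (hq' : ∀ k, 0 ≤ (q'.take k).sum) (h : q ++ (-1) :: r = q' ++ (-1) :: r') :
    q'.length ≤ q.length := by
  by_contra! hlt
  have := congrArg (fun l => (l.take (q.length + 1)).sum) h
  simp only [List.take_append, List.sum_append, Nat.sub_eq_zero_of_le hlt, List.take_zero,
    List.sum_nil, add_zero, List.take_of_length_le (Nat.le_succ q.length), hq,
    Nat.add_sub_cancel_left, List.take_succ_cons, List.sum_cons, zero_add] at this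
  linarith [hq' (q.length + 1)]

lemma wrap_inj {q q' r r' : List ℤ} (hq : IsDyckPath q) (hq' : IsDyckPath q')
    (h : 1 :: q ++ (-1) :: r = 1 :: q' ++ (-1) :: r') : q = q' ∧ r = r' := by
  have h' : q ++ (-1) :: r = q' ++ (-1) :: r' := List.cons_injective h
  obtain ⟨rfl, h''⟩ := List.append_inj h' (le_antisymm
    (length_le_of_append_neg_one_eq hq'.2.2 hq.2.1 h'.symm)
    (length_le_of_append_neg_one_eq hq.2.2 hq'.2.1 h'))
  exact ⟨rfl, List.cons_injective h''⟩

lemma finite_sublevel_count {Q : List ℤ → Prop} (hQ : ∀ p, Q p → IsDyckPath p) (n : ℕ) :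
    {p : {p // Q p} | p.1.count 1 ≤ n}.Finite := by
  have hwords : {l : List ℤ | l.length ≤ 2 * n ∧ ∀ s ∈ l, s = 1 ∨ s = -1}.Finite := by
    refine ((List.finite_length_le Bool (2 * n)).image
      (List.map fun b => if b then 1 else -1)).subset ?_
    rintro l ⟨hl, hs⟩
    refine ⟨l.map (· = 1), by simpa using hl, ?_⟩
    rw [List.map_map]
    conv_rhs => rw [← List.map_id l]
    exact List.map_congr_left fun s hs' => by rcases hs s hs' with rfl | rfl <;> simp
  refine (hwords.preimage Subtype.val_injective.injOn).subset fun p (hp : p.1.count 1 ≤ n) => ?_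
  have := (hQ _ p.2).length_eq
  exact ⟨by omega, (hQ _ p.2).1⟩

-- `p.count 1`, the number of up-steps, is the semilength of a Dyck path.
noncomputable def heightLTGF (h : ℕ) : PowerSeries ℤ :=
  weightGF fun p : {p : List ℤ // IsDyckPath p ∧ pathHeight p < h} => p.1.count 1

noncomputable def heightGF (h : ℕ) : PowerSeries ℤ :=
  weightGF fun p : {p : List ℤ // IsDyckPath p ∧ pathHeight p = h} => p.1.count 1

def firstReturn (h : ℕ) :
    Unit ⊕ ({q // IsDyckPath q ∧ pathHeight q < h} × {r // IsDyckPath r ∧ pathHeight r < h + 1}) →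
      {p // IsDyckPath p ∧ pathHeight p < h + 1} :=
  Sum.elim (fun _ => ⟨[], .nil, by simp [pathHeight]⟩) fun z =>
    ⟨1 :: z.1.1 ++ (-1) :: z.2.1, z.1.2.1.wrap z.2.2.1, by
      rw [pathHeight_wrap _ z.1.2.1.2.2]
      have := z.1.2.2
      have := z.2.2.2
      omega⟩

lemma firstReturn_bijective (h : ℕ) : Function.Bijective (firstReturn h) := by
  constructor
  · rintro (_ | ⟨q, r⟩) (_ | ⟨q', r'⟩) heq
    · rfl
    · simp [firstReturn] at heq
    · simp [firstReturn] at heq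
    · obtain ⟨hq, hr⟩ := wrap_inj q.2.1 q'.2.1 (congrArg Subtype.val heq)
      simp only [Sum.inr.injEq, Prod.mk.injEq]
      exact ⟨Subtype.ext hq, Subtype.ext hr⟩
  · rintro ⟨p, hp, hph⟩
    rcases eq_or_ne p [] with rfl | hne
    · exact ⟨Sum.inl (), rfl⟩
    · obtain ⟨q, r, hq, hr, rfl⟩ := hp.exists_eq_wrap hne
      rw [pathHeight_wrap _ hq.2.2] at hph
      exact ⟨Sum.inr (⟨q, hq, by omega⟩, ⟨r, hr, by omega⟩), rfl⟩

lemma heightLTGF_succ (h : ℕ) :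
    heightLTGF (h + 1) = 1 + X * (heightLTGF h * heightLTGF (h + 1)) := by
  have hfin (h : ℕ) := finite_sublevel_count (Q := fun p => IsDyckPath p ∧ pathHeight p < h)
    fun _ hp => hp.1
  have hweight : ∀ z, (firstReturn h z).1.count 1 =
      Sum.elim (fun _ => 0) (fun z => z.1.1.count 1 + z.2.1.count 1 + 1) z := by
    rintro (_ | z)
    · rfl
    · exact count_wrap _ _
  have hfin_add_one (n : ℕ) := (finite_sublevel_prod (hfin h) (hfin (h + 1)) n).subset
    fun z (hz : z.1.1.count 1 + z.2.1.count 1 + 1 ≤ n) => show _ ≤ n by omega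
  conv_lhs => rw [heightLTGF, weightGF_congr (Equiv.ofBijective _ (firstReturn_bijective h))
    hweight, weightGF_sum (fun _ => Set.toFinite _) hfin_add_one, weightGF_zero,
    weightGF_add_one, weightGF_prod (hfin h) (hfin (h + 1))]
  rfl

lemma heightLTGF_succ_eq_add (h : ℕ) : heightLTGF (h + 1) = heightLTGF h + heightGF h := by
  classical
  have hfin (Q : List ℤ → Prop) := finite_sublevel_count (Q := fun p => IsDyckPath p ∧ Q p)
    fun _ hp => hp.1
  let e : {p // IsDyckPath p ∧ pathHeight p < h + 1} ≃ _ :=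
    (Equiv.subtypeEquivRight fun p => by rw [Nat.lt_succ_iff_lt_or_eq, and_or_left]).trans <|
    subtypeOrEquiv (fun p : List ℤ => IsDyckPath p ∧ pathHeight p < h)
      (fun p => IsDyckPath p ∧ pathHeight p = h)
      fun _ hlt heq p hp => (hlt p hp).2.ne (heq p hp).2
  conv_lhs => rw [heightLTGF, weightGF_congr e.symm
    (w := Sum.elim (fun p => p.1.count 1) (fun p => p.1.count 1)) (by rintro (_ | _) <;> rfl),
    weightGF_sum (hfin _) (hfin _)]
  rfl

lemma sub_eq_X_mul_of_mul_one_sub_eq_one {R : Type*} [CommRing R] {X A B C D : R}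
    (hB : B * (1 - X * A) = 1) (hC : C * (1 - X * B) = 1) (hD : D * (1 - X * C) = 1) :
    C - B = X * (2 * (C - B) + (B - A) + (D - C) - (C - B) * ((B - A) + (C - B) + (D - C))) := by
  have hDf : D * (1 - (C - B)) = B := by linear_combination B * hD - D * hC
  refine (IsUnit.of_mul_eq_one _ hD).mul_left_cancel ?_
  linear_combination (-X * (D - A) - 1) * hDf + hD - hB

lemma heightGF_succ (y : ℕ) :
    heightGF (y + 1) = X * (2 * heightGF (y + 1) + heightGF y + heightGF (y + 2)
      - heightGF (y + 1) * (heightGF y + heightGF (y + 1) + heightGF (y + 2))) := by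
  have hrel (h : ℕ) : heightLTGF (h + 1) * (1 - X * heightLTGF h) = 1 := by
    linear_combination heightLTGF_succ h
  have hsub (h : ℕ) : heightGF h = heightLTGF (h + 1) - heightLTGF h := by
    rw [heightLTGF_succ_eq_add]; ring
  simp only [hsub]
  exact sub_eq_X_mul_of_mul_one_sub_eq_one (hrel y) (hrel (y + 1)) (hrel (y + 2))

lemma coeff_prod_heightGF (n : ℕ) (a : List ℕ) :
    coeff n ((a.map heightGF).prod) = P n a := by
  have hfin (i : Fin a.length) := finite_sublevel_count
    (Q := fun p => IsDyckPath p ∧ pathHeight p = a[i.1]) fun _ hp => hp.1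
  have hpi : weightGF (fun f : ∀ i : Fin a.length,
      {p : List ℤ // IsDyckPath p ∧ pathHeight p = a[i.1]} => ∑ i, (f i).1.count 1) =
      ∏ i : Fin a.length, heightGF a[i.1] :=
    weightGF_pi hfin
  rw [← Fin.prod_univ_fun_getElem, ← hpi, coeff_weightGF]
  have hlen {p : Fin a.length → List ℤ} (hp : ∀ i, IsDyckPath (p i)) :
      ∑ i, ((p i).length : ℤ) = 2 * ∑ i, (p i).count 1 := by
    simp [(hp _).length_eq, Finset.mul_sum]
  exact congrArg Nat.cast <| Nat.card_congr
    { toFun f := ⟨fun i => (f.1 i).1, fun i => (f.1 i).2.1,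
        by have := f.2; rw [hlen fun i => (f.1 i).2.1]; omega,
        fun i => (f.1 i).2.2⟩
      invFun p := ⟨fun i => ⟨p.1 i, p.2.1 i, p.2.2.2 i⟩, by
        show ∑ i, (p.1 i).count 1 = n
        have := hlen p.2.1 ▸ p.2.2.1
        omega⟩
      left_inv _ := rfl
      right_inv _ := rfl }

noncomputable def groupedGF (x : ℕ) (a : List ℕ) : PowerSeries ℤ :=
  ((a.zipIdx.flatMap fun q => List.replicate q.1 (x + q.2)).map heightGF).prod

lemma coeff_groupedGF (n x : ℕ) (a : List ℕ) : coeff n (groupedGF x a) = Qx n x a :=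
  coeff_prod_heightGF _ _

lemma groupedGF_cons (x b : ℕ) (a : List ℕ) :
    groupedGF x (b :: a) = heightGF x ^ b * groupedGF (x + 1) a := by
  simp only [groupedGF, List.zipIdx_cons', List.flatMap_cons, List.flatMap_map, List.map_append,
    List.prod_append, List.map_replicate, List.prod_replicate, add_zero]
  congr 5
  ext q
  simp [Nat.add_assoc, Nat.add_comm 1]

/-- The case `k = 0` is `a₁ = 0`, `l = []`: a trailing zero entry does not change `Qx`. -/
theorem grouped_shorten_fixed_base_first (n : ℕ) (hn : 1 ≤ n) (x : ℕ) (hx : 1 ≤ x)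
    (a₀ a₁ : ℕ) (l : List ℕ) (ha : 1 ≤ a₀) :
    (Qx (n : ℤ) x (a₀ :: a₁ :: l) : ℤ) =
      2 * Qx ((n : ℤ) - 1) x (a₀ :: a₁ :: l)
        + Qx ((n : ℤ) - 1) (x - 1) (1 :: (a₀ - 1) :: a₁ :: l)
        + Qx ((n : ℤ) - 1) x ((a₀ - 1) :: (a₁ + 1) :: l)
        - Qx ((n : ℤ) - 1) (x - 1) (1 :: a₀ :: a₁ :: l)
        - Qx ((n : ℤ) - 1) x ((a₀ + 1) :: a₁ :: l)
        - Qx ((n : ℤ) - 1) x (a₀ :: (a₁ + 1) :: l) := by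
  obtain ⟨k, rfl⟩ : ∃ k, n = k + 1 := ⟨n - 1, by omega⟩
  obtain ⟨y, rfl⟩ : ∃ y, x = y + 1 := ⟨x - 1, by omega⟩
  obtain ⟨c, rfl⟩ : ∃ c, a₀ = c + 1 := ⟨a₀ - 1, by omega⟩
  have hseries : groupedGF (y + 1) ((c + 1) :: a₁ :: l) =
      X * (2 * groupedGF (y + 1) ((c + 1) :: a₁ :: l) + groupedGF y (1 :: c :: a₁ :: l)
        + groupedGF (y + 1) (c :: (a₁ + 1) :: l) - groupedGF y (1 :: (c + 1) :: a₁ :: l)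
        - groupedGF (y + 1) ((c + 2) :: a₁ :: l)
        - groupedGF (y + 1) ((c + 1) :: (a₁ + 1) :: l)) := by
    simp only [groupedGF_cons, add_assoc, Nat.reduceAdd]
    linear_combination
      (heightGF (y + 1) ^ c * heightGF (y + 2) ^ a₁ * groupedGF (y + 3) l) * heightGF_succ y
  have hcoeff := congrArg (coeff (k + 1)) hseries
  simp only [coeff_succ_X_mul, two_mul, map_add, map_sub, coeff_groupedGF] at hcoeff
  simp only [Nat.add_sub_cancel, Nat.cast_add, Nat.cast_one, add_sub_cancel_right]
  push_cast at hcoeff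
  linear_combination hcoeff
end
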